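/- Let (G, H) be a complex unit gain graph whose underlying simple graph G is acyclic (a forest). Then rank(H) = 2m(G), where m(G) is the matching number of G. -/

import Mathlib

/-!
Induct on the number of vertices. If `G` has no edges, then `H = 0` and `m(G) = 0`. Otherwise the
first vertex `x` of a longest path is a leaf; let `u` be its neighbour. The row and the column of
`x` in `H` vanish except for the unimodular entries `H x u` and `H u x`. So if `x, u` are listed
first, the leading `2 × 2` block is invertible and its Schur complement is the principal
submatrix on `V ∖ {x, u}`, which means the rank drops by exactly `2`. For matchings: deleting `x`,
`u` and the partner of `u` costs a matching at most its edge at `u`, and a matching of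
`G - x - u` extends by the edge `xu`. So `m` drops by exactly `1`.
-/

/-- `(G, H)` is a complex unit gain graph: `H` is Hermitian, entries of adjacent pairs
have modulus `1`, and entries of non-adjacent pairs (including the diagonal) vanish. -/
def IsUnitGain {V : Type*} (G : SimpleGraph V) (H : Matrix V V ℂ) : Prop :=
  H.IsHermitian ∧ (∀ i j, G.Adj i j → ‖H i j‖ = 1) ∧
    ∀ i j, ¬ G.Adj i j → H i j = 0

/-- The matching number of a simple graph: the maximum size of a matching. -/
noncomputable def matchNum {V : Type*} (G : SimpleGraph V) : ℕ :=
  sSup {n : ℕ | ∃ M : G.Subgraph, M.IsMatching ∧ M.edgeSet.ncard = n}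

/-- The cyclomatic number `c(G) = |E(G)| - |V| + ω(G)` of a simple graph. -/
noncomputable def cycNum {V : Type*} (G : SimpleGraph V) : ℤ :=
  (G.edgeSet.ncard : ℤ) - (Nat.card V : ℤ) + (Nat.card G.ConnectedComponent : ℤ)

/-- The gain of a walk: the product of the matrix entries along its darts. -/
noncomputable def gain {V : Type*} {G : SimpleGraph V} (H : Matrix V V ℂ) {u v : V}
    (w : G.Walk u v) : ℂ :=
  (w.darts.map fun d => H d.toProd.1 d.toProd.2).prod

/-- The set of vertices of `G` lying on some cycle. -/
def cycVerts {V : Type*} (G : SimpleGraph V) : Set V :=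
  {u | ∃ (x : V) (w : G.Walk x x), w.IsCycle ∧ u ∈ w.support}

/-- `u` and `v` lie on a common cycle of `G`. -/
def cycleRel {V : Type*} (G : SimpleGraph V) (u v : V) : Prop :=
  ∃ (x : V) (w : G.Walk x x), w.IsCycle ∧ u ∈ w.support ∧ v ∈ w.support

/-- The setoid generated by "lying on a common cycle". -/
def contractSetoid {V : Type*} (G : SimpleGraph V) : Setoid V :=
  Relation.EqvGen.setoid (cycleRel G)

/-- `T_G`: the graph obtained from `G` by contracting each cycle into a single vertex. -/
def TG {V : Type*} (G : SimpleGraph V) : SimpleGraph (Quotient (contractSetoid G)) where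
  Adj a b := a ≠ b ∧ ∃ u v : V, Quotient.mk (contractSetoid G) u = a ∧
      Quotient.mk (contractSetoid G) v = b ∧ G.Adj u v
  symm := ⟨fun a b ⟨hne, u, v, hu, hv, hadj⟩ => ⟨hne.symm, v, u, hv, hu, hadj.symm⟩⟩
  loopless := ⟨fun a ⟨hne, _⟩ => hne rfl⟩

/-- The rank of the principal submatrix of `H` indexed by a set `s` of vertices. -/
noncomputable def rankOn {V : Type*} [Fintype V] (H : Matrix V V ℂ) (s : Set V) : ℕ :=
  letI : Fintype s := (Set.toFinite s).fintype
  (H.submatrix (Subtype.val : s → V) (Subtype.val : s → V)).rank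

/-- The cycles of `G` are pairwise vertex-disjoint: any two cycles sharing a
vertex have the same edges. -/
def cyclesDisjoint {V : Type*} (G : SimpleGraph V) : Prop :=
  ∀ ⦃x y : V⦄ (c₁ : G.Walk x x) (c₂ : G.Walk y y), c₁.IsCycle → c₂.IsCycle →
    (∃ u, u ∈ c₁.support ∧ u ∈ c₂.support) → ∀ e, e ∈ c₁.edges ↔ e ∈ c₂.edges

/-- `b(G)`: the minimum cardinality of a set `S` of vertices such that `G - S` is
bipartite (i.e. `2`-colorable). -/
noncomputable def bipNum {V : Type*} (G : SimpleGraph V) : ℕ :=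
  sInf {n : ℕ | ∃ S : Set V, S.ncard = n ∧ (G.induce Sᶜ).Colorable 2}

namespace Submodule

variable {R M N : Type*} [Semiring R] [AddCommMonoid M] [AddCommMonoid N] [Module R M]
  [Module R N]

def prodEquiv (p : Submodule R M) (q : Submodule R N) : p.prod q ≃ₗ[R] p × q where
  toFun x := (⟨x.1.1, x.2.1⟩, ⟨x.1.2, x.2.2⟩)
  invFun x := ⟨(x.1, x.2), x.1.2, x.2.2⟩
  map_add' _ _ := rfl
  map_smul' _ _ := rfl
  left_inv _ := rfl
  right_inv _ := rfl

end Submodule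

def Equiv.finTwoSumComplPair {V : Type*} [DecidableEq V] {x u : V} (hxu : x ≠ u) :
    Fin 2 ⊕ ({v | v ≠ x ∧ v ≠ u} : Set V) ≃ V where
  toFun := Sum.elim ![x, u] Subtype.val
  invFun v := if hx : v = x then .inl 0 else if hu : v = u then .inl 1 else .inr ⟨v, hx, hu⟩
  left_inv := by
    rintro (i | ⟨v, hx, hu⟩)
    · fin_cases i <;> simp [hxu.symm]
    · simp [hx, hu]
  right_inv v := by
    by_cases hx : v = x <;> by_cases hu : v = u <;> simp_all

namespace Matrix

variable {K l m n o : Type*} [Field K] [Fintype m] [Fintype o]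

theorem rank_fromBlocks_zero_zero (A : Matrix l m K) (D : Matrix n o K) :
    (fromBlocks A 0 0 D).rank = A.rank + D.rank := by
  classical
  have hmul : (fromBlocks A 0 0 D).mulVecLin =
      (LinearEquiv.sumArrowLequivProdArrow l n K K).symm.toLinearMap ∘ₗ
        (A.mulVecLin.prodMap D.mulVecLin) ∘ₗ
          (LinearEquiv.sumArrowLequivProdArrow m o K K).toLinearMap := by
    refine LinearMap.ext fun v => funext fun i => ?_
    cases i <;> simp [fromBlocks_mulVec, LinearEquiv.sumArrowLequivProdArrow,
      Equiv.sumArrowEquivProdArrow]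
  rw [rank, hmul, LinearMap.range_comp, LinearMap.range_comp, LinearEquiv.range, Submodule.map_top,
    LinearEquiv.finrank_map_eq, LinearMap.range_prodMap,
    (Submodule.prodEquiv _ _).finrank_eq, Module.finrank_prod, rank, rank]

theorem rank_fromBlocks_of_isUnit_det [Fintype l] [DecidableEq m] (A : Matrix m m K)
    (B : Matrix m o K) (C : Matrix l m K) (D : Matrix l o K) (hA : IsUnit A.det) :
    (fromBlocks A B C D).rank = Fintype.card m + (D - C * A⁻¹ * B).rank := by
  classical
  let := invertibleOfIsUnitDet A hA
  rw [← invOf_eq_nonsing_inv, fromBlocks_eq_of_invertible₁₁, rank_mul_eq_left_of_isUnit_det,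
    rank_mul_eq_right_of_isUnit_det, rank_fromBlocks_zero_zero,
    rank_of_isUnit _ (isUnit_of_invertible A)]
  all_goals simp

theorem rank_eq_two_add_rank_of_pendant {V : Type*} [Fintype V] [DecidableEq V]
    (M : Matrix V V K) {x u : V} (hxu : x ≠ u) (hrow : ∀ j, j ≠ u → M x j = 0)
    (hcol : ∀ i, i ≠ u → M i x = 0) (hxu₀ : M x u ≠ 0) (hux₀ : M u x ≠ 0) :
    M.rank = 2 + (M.submatrix ((↑) : ({v | v ≠ x ∧ v ≠ u} : Set V) → V)
      ((↑) : ({v | v ≠ x ∧ v ≠ u} : Set V) → V)).rank := by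
  set e := Equiv.finTwoSumComplPair hxu
  set N := M.submatrix e e
  have hA : N.toBlocks₁₁ = !![0, M x u; M u x, M u u] := by
    ext i j
    fin_cases i <;> fin_cases j <;>
      simp [N, e, Equiv.finTwoSumComplPair, toBlocks₁₁, hrow x hxu]
  have hdet : IsUnit N.toBlocks₁₁.det := by
    rw [hA, det_fin_two_of, isUnit_iff_ne_zero]
    simpa using mul_ne_zero hxu₀ hux₀
  -- `C` and `B` are supported on column and row `1`, where `A⁻¹ 1 1 = A 0 0 / det A = 0`
  have hschur : N.toBlocks₂₁ * N.toBlocks₁₁⁻¹ * N.toBlocks₁₂ = 0 := by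
    rw [hA]
    ext i j
    simp [inv_def, mul_apply, Fin.sum_univ_two, N, e, Equiv.finTwoSumComplPair, toBlocks₁₂,
      toBlocks₂₁, hrow _ j.2.2, hcol _ i.2.2]
  rw [← rank_submatrix M e e]
  change N.rank = _
  rw [← fromBlocks_toBlocks N, rank_fromBlocks_of_isUnit_det _ _ _ _ hdet, hschur, sub_zero]
  rfl

end Matrix

namespace SimpleGraph

variable {V W : Type*} {G : SimpleGraph V} {G' : SimpleGraph W}

theorem IsAcyclic.exists_adj_forall_adj_eq [Finite V] (hG : G.IsAcyclic) (hne : G ≠ ⊥) :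
    ∃ x u, G.Adj x u ∧ ∀ w, G.Adj x w → w = u := by
  obtain ⟨a, b, hab⟩ : ∃ a b, G.Adj a b := by
    simpa [eq_bot_iff_forall_not_adj] using hne
  have : Nonempty V := ⟨a⟩
  -- the first vertex of a longest path is a leaf
  obtain ⟨x, v, p, hp, hmax⟩ := Walk.exists_isPath_forall_isPath_length_le_length G
  have hlen : 1 ≤ p.length := hmax a b (.cons hab .nil) (by simp [hab.ne])
  have hnil : ¬p.Nil := fun hnil => by simp [Walk.length_eq_zero_iff.mpr hnil] at hlen
  refine ⟨x, p.snd, p.adj_snd hnil, fun w hw => hG.eq_snd_of_adj_start hp hw ?_⟩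
  by_contra hw'
  simpa using hmax _ _ (p.cons hw.symm) (hp.cons hw')

namespace Subgraph

theorem ncard_edgeSet_map {f : G →g G'} (hf : Function.Injective f) (M : G.Subgraph) :
    (M.map f).edgeSet.ncard = M.edgeSet.ncard := by
  rw [edgeSet_map, Set.ncard_image_of_injective _ (Sym2.map.injective hf)]

theorem map_comap_of_verts_subset (f : G' ↪g G) {M : G.Subgraph} (h : M.verts ⊆ Set.range f) :
    (M.comap f.toHom).map f.toHom = M := by
  ext
  · refine ⟨?_, fun ha => ?_⟩
    · rintro ⟨a, ha, rfl⟩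
      exact ha
    · obtain ⟨a, rfl⟩ := h ha
      exact ⟨a, ha, rfl⟩
  · refine ⟨?_, fun hab => ?_⟩
    · rintro ⟨a, b, ⟨-, hab⟩, rfl, rfl⟩
      exact hab
    · obtain ⟨a, rfl⟩ := h (M.edge_vert hab)
      obtain ⟨b, rfl⟩ := h (M.edge_vert hab.symm)
      exact ⟨a, b, ⟨f.map_adj_iff.mp (M.adj_sub hab), hab⟩, rfl, rfl⟩

theorem IsMatching.comap (f : G' ↪g G) {M : G.Subgraph} (hM : M.IsMatching)
    (h : M.verts ⊆ Set.range f) : (M.comap f.toHom).IsMatching := by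
  intro v hv
  obtain ⟨w, hw, huniq⟩ := hM hv
  obtain ⟨w, rfl⟩ := h (M.edge_vert hw.symm)
  exact ⟨w, ⟨f.map_adj_iff.mp (M.adj_sub hw), hw⟩, fun y hy => f.injective (huniq _ hy.2)⟩

theorem IsMatching.deleteVerts {M : G.Subgraph} (hM : M.IsMatching) {S : Set V}
    (hS : ∀ ⦃a b⦄, M.Adj a b → a ∈ S → b ∈ S) : (M.deleteVerts S).IsMatching := by
  rintro v ⟨hv, hvS⟩
  obtain ⟨w, hw, huniq⟩ := hM hv
  have hwS : w ∉ S := fun hwS => hvS (hS hw.symm hwS)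
  refine ⟨w, deleteVerts_adj.mpr ⟨hv, hvS, M.edge_vert hw.symm, hwS, hw⟩, fun y hy => ?_⟩
  exact huniq y (deleteVerts_adj.mp hy).2.2.2.2

theorem IsMatching.ncard_incidenceSet_le_one {M : G.Subgraph} (hM : M.IsMatching) (u : V) :
    (M.incidenceSet u).ncard ≤ 1 := by
  have hsub : (M.incidenceSet u).Subsingleton := by
    rintro _ ⟨he₁, hu₁⟩ _ ⟨he₂, hu₂⟩
    obtain ⟨w₁, rfl⟩ := Sym2.mem_iff_exists.mp hu₁
    obtain ⟨w₂, rfl⟩ := Sym2.mem_iff_exists.mp hu₂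
    rw [hM.eq_of_adj_left (Subgraph.mem_edgeSet.mp he₁) (Subgraph.mem_edgeSet.mp he₂)]
  exact (Set.ncard_le_one hsub.finite).mpr hsub

end Subgraph

open Subgraph

theorem bddAbove_matchNum_set [Finite V] (G : SimpleGraph V) :
    BddAbove {n : ℕ | ∃ M : G.Subgraph, M.IsMatching ∧ M.edgeSet.ncard = n} := by
  refine ⟨Nat.card (Sym2 V), ?_⟩
  rintro _ ⟨M, -, rfl⟩
  exact Set.ncard_le_card _

theorem exists_isMatching_ncard_edgeSet_eq_matchNum [Finite V] (G : SimpleGraph V) :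
    ∃ M : G.Subgraph, M.IsMatching ∧ M.edgeSet.ncard = matchNum G := by
  refine Nat.sSup_mem ?_ (bddAbove_matchNum_set G)
  exact ⟨0, ⊥, by simp [IsMatching]⟩

theorem Subgraph.IsMatching.ncard_edgeSet_le_matchNum [Finite V] {M : G.Subgraph}
    (hM : M.IsMatching) : M.edgeSet.ncard ≤ matchNum G :=
  le_csSup (bddAbove_matchNum_set G) ⟨M, hM, rfl⟩

@[simp]
theorem matchNum_bot : matchNum (⊥ : SimpleGraph V) = 0 := by
  refine Nat.eq_zero_of_le_zero (csSup_le' ?_)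
  rintro _ ⟨M, -, rfl⟩
  simp [Set.subset_empty_iff.mp (M.edgeSet_subset.trans_eq edgeSet_bot)]

theorem Subgraph.IsMatching.ncard_edgeSet_le_matchNum_induce [Finite V] {M : G.Subgraph}
    (hM : M.IsMatching) {s : Set V} (hs : M.verts ⊆ s) :
    M.edgeSet.ncard ≤ matchNum (G.induce s) := by
  let f := Embedding.induce (G := G) s
  have hrange : M.verts ⊆ Set.range f := fun v hv => ⟨⟨v, hs hv⟩, rfl⟩
  rw [← map_comap_of_verts_subset f hrange, ncard_edgeSet_map f.injective]
  exact (hM.comap f hrange).ncard_edgeSet_le_matchNum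

theorem matchNum_induce_add_one_le [Finite V] {x u : V} (hxu : G.Adj x u) {s : Set V}
    (hx : x ∉ s) (hu : u ∉ s) : matchNum (G.induce s) + 1 ≤ matchNum G := by
  obtain ⟨M, hM, hcard⟩ := exists_isMatching_ncard_edgeSet_eq_matchNum (G.induce s)
  let f := (Embedding.induce (G := G) s).toHom
  have hMf := hM.map f Subtype.val_injective
  have hverts : (M.map f).verts ⊆ s := by
    rintro _ ⟨v, -, rfl⟩
    exact v.2
  have hdisj : Disjoint (M.map f).verts (G.subgraphOfAdj hxu).verts := by
    simp only [subgraphOfAdj_verts, Set.disjoint_insert_right, Set.disjoint_singleton_right]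
    exact ⟨fun h => hx (hverts h), fun h => hu (hverts h)⟩
  have hedges : Disjoint (M.map f).edgeSet (G.subgraphOfAdj hxu).edgeSet := by
    rw [edgeSet_subgraphOfAdj, Set.disjoint_singleton_right]
    exact fun h => Set.disjoint_left.mp hdisj ((M.map f).edge_vert h) (by simp)
  have hmatch : (M.map f ⊔ G.subgraphOfAdj hxu).IsMatching := hMf.sup (.subgraphOfAdj hxu)
    (by rwa [hMf.support_eq_verts, (IsMatching.subgraphOfAdj hxu).support_eq_verts])
  calc matchNum (G.induce s) + 1
      = (M.map f ⊔ G.subgraphOfAdj hxu).edgeSet.ncard := by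
        rw [Subgraph.edgeSet_sup, Set.ncard_union_eq hedges,
          ncard_edgeSet_map Subtype.val_injective, hcard, edgeSet_subgraphOfAdj,
          Set.ncard_singleton]
    _ ≤ matchNum G := hmatch.ncard_edgeSet_le_matchNum

theorem matchNum_le_matchNum_induce_add_one [Finite V] {x u : V}
    (hleaf : ∀ w, G.Adj x w → w = u) :
    matchNum G ≤ matchNum (G.induce {v | v ≠ x ∧ v ≠ u}) + 1 := by
  obtain ⟨M, hM, hcard⟩ := exists_isMatching_ncard_edgeSet_eq_matchNum G
  let S := insert x (insert u (M.neighborSet u))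
  have hS : ∀ ⦃a b⦄, M.Adj a b → a ∈ S → a = u ∨ b = u := by
    rintro a b hab (rfl | rfl | hua)
    · exact .inr (hleaf b (M.adj_sub hab))
    · exact .inl rfl
    · exact .inr (hM.eq_of_adj_right hab.symm hua)
  have hclosed : ∀ ⦃a b⦄, M.Adj a b → a ∈ S → b ∈ S := fun a b hab ha =>
    (hS hab ha).elim (fun h => .inr (.inr (h ▸ hab))) (fun h => .inr (.inl h))
  have hverts : (M.deleteVerts S).verts ⊆ {v | v ≠ x ∧ v ≠ u} :=
    fun v ⟨_, hv⟩ => ⟨fun h => hv (.inl h), fun h => hv (.inr (.inl h))⟩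
  have hedges : M.edgeSet ⊆ (M.deleteVerts S).edgeSet ∪ M.incidenceSet u := by
    intro e he
    induction e using Sym2.ind with | h a b => ?_
    by_cases ha : a ∈ S
    · exact .inr ⟨he, (hS he ha).elim (· ▸ Sym2.mem_mk_left _ _) (· ▸ Sym2.mem_mk_right _ _)⟩
    by_cases hb : b ∈ S
    · exact .inr ⟨he, (hS (M.adj_symm he) hb).elim (· ▸ Sym2.mem_mk_right _ _)
        (· ▸ Sym2.mem_mk_left _ _)⟩
    exact .inl (deleteVerts_adj.mpr ⟨M.edge_vert he, ha, M.edge_vert (M.adj_symm he), hb, he⟩)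
  calc matchNum G = M.edgeSet.ncard := hcard.symm
    _ ≤ (M.deleteVerts S).edgeSet.ncard + (M.incidenceSet u).ncard :=
      (Set.ncard_le_ncard hedges).trans (Set.ncard_union_le _ _)
    _ ≤ matchNum (G.induce {v | v ≠ x ∧ v ≠ u}) + 1 :=
      add_le_add ((hM.deleteVerts hclosed).ncard_edgeSet_le_matchNum_induce hverts)
        (hM.ncard_incidenceSet_le_one u)

theorem matchNum_eq_matchNum_induce_add_one [Finite V] {x u : V} (hxu : G.Adj x u)
    (hleaf : ∀ w, G.Adj x w → w = u) :
    matchNum G = matchNum (G.induce {v | v ≠ x ∧ v ≠ u}) + 1 :=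
  (matchNum_le_matchNum_induce_add_one hleaf).antisymm
    (matchNum_induce_add_one_le hxu (fun h => h.1 rfl) (fun h => h.2 rfl))

end SimpleGraph

section IsUnitGain

variable {V : Type*} {G : SimpleGraph V} {H : Matrix V V ℂ}

theorem IsUnitGain.induce (hH : IsUnitGain G H) (s : Set V) :
    IsUnitGain (G.induce s) (H.submatrix (↑) (↑)) :=
  ⟨hH.1.submatrix _, fun _ _ h => hH.2.1 _ _ h, fun _ _ h => hH.2.2 _ _ h⟩

theorem IsUnitGain.rank_eq_two_add_of_leaf [Fintype V] [DecidableEq V] (hH : IsUnitGain G H)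
    {x u : V} (hxu : G.Adj x u) (hleaf : ∀ w, G.Adj x w → w = u) :
    H.rank = 2 + (H.submatrix ((↑) : ({v | v ≠ x ∧ v ≠ u} : Set V) → V)
      ((↑) : ({v | v ≠ x ∧ v ≠ u} : Set V) → V)).rank := by
  have hrow : ∀ j, j ≠ u → H x j = 0 := fun j hj => hH.2.2 x j fun h => hj (hleaf j h)
  refine H.rank_eq_two_add_rank_of_pendant hxu.ne hrow (fun i hi => ?_) ?_ ?_
  · rw [← hH.1.apply i x, hrow i hi, star_zero]
  · exact norm_ne_zero_iff.mp (by simp [hH.2.1 x u hxu])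
  · exact norm_ne_zero_iff.mp (by simp [hH.2.1 u x hxu.symm])

end IsUnitGain

/-- **Lemma.** If the underlying graph of a complex unit gain graph `(G, H)` is
acyclic (a forest), then `rank(H) = 2m(G)`. -/
theorem rank_eq_twice_matchNum_of_acyclic {V : Type*} [Fintype V]
    (G : SimpleGraph V) (H : Matrix V V ℂ)
    (hH : IsUnitGain G H) (hac : G.IsAcyclic) :
    H.rank = 2 * matchNum G := by
  classical
  induction hn : Fintype.card V using Nat.strong_induction_on generalizing V with
  | _ n ih =>
  by_cases hG : G = ⊥
  · subst hG
    have hH0 : H = 0 := Matrix.ext fun i j => hH.2.2 i j (by simp)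
    rw [hH0, Matrix.rank_zero, SimpleGraph.matchNum_bot]
  obtain ⟨x, u, hxu, hleaf⟩ := hac.exists_adj_forall_adj_eq hG
  let s : Set V := {v | v ≠ x ∧ v ≠ u}
  have hcard : Fintype.card s < n := hn ▸ Fintype.card_subtype_lt (p := (· ∈ s)) fun h => h.1 rfl
  rw [hH.rank_eq_two_add_of_leaf hxu hleaf, ih _ hcard (G.induce s) _ (hH.induce s)
    (hac.induce s) rfl, SimpleGraph.matchNum_eq_matchNum_induce_add_one hxu hleaf]
  ring
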